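/- For a strictly positive discrete probability distribution, the factorization property F over the cliques of a graph implies the global Markov property GM: if C separates A from B in the graph and P(X_V) = ∏_{K∈cliques} ψ_K(X_K) with ψ_K > 0, then P(X_{A∪B∪C}) = P(X_{A∪C}) P(X_{B∪C}) / P(X_C). -/

import Mathlib

open scoped Classical BigOperators

namespace TCherryPaper
variable {d : ℕ} {Ω : Type} [Fintype Ω]

/-- Marginal of `p` on coordinates `S`, evaluated at a full configuration `y`. -/
noncomputable def marg (p : (Fin d → Ω) → ℝ) (S : Finset (Fin d)) (y : Fin d → Ω) : ℝ :=
  ∑ x : Fin d → Ω, if ∀ i ∈ S, x i = y i then p x else 0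

/-- Shannon entropy of the marginal of `p` on coordinates `S` (as `-E_p[log P(X_S)]`). -/
noncomputable def Hm (p : (Fin d → Ω) → ℝ) (S : Finset (Fin d)) : ℝ :=
  -∑ y : Fin d → Ω, p y * Real.log (marg p S y)

/-- Information content `I(X_S) = ∑_{i∈S} H(X_i) − H(X_S)`. -/
noncomputable def info (p : (Fin d → Ω) → ℝ) (S : Finset (Fin d)) : ℝ :=
  (∑ i ∈ S, Hm p {i}) - Hm p S

/-- Kullback–Leibler divergence. -/
noncomputable def KL (p q : (Fin d → Ω) → ℝ) : ℝ :=
  ∑ y : Fin d → Ω, p y * Real.log (p y / q y)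

def IsProb (p : (Fin d → Ω) → ℝ) : Prop := (∀ y, 0 ≤ p y) ∧ ∑ y, p y = 1

/-- The `j`-th running-intersection separator of an ordered list of clusters. -/
def sep (Cs : List (Finset (Fin d))) (j : ℕ) : Finset (Fin d) :=
  Cs.getD j ∅ ∩ (Cs.take j).foldr (· ∪ ·) ∅

/-- Running intersection property. -/
def RIP (Cs : List (Finset (Fin d))) : Prop :=
  ∀ j, 1 ≤ j → j < Cs.length → ∃ i < j, sep Cs j ⊆ Cs.getD i ∅

/-- `𝒞` is the cluster set and `𝒮` the separator set of a junction tree. -/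
def IsJunctionTree (𝒞 𝒮 : Finset (Finset (Fin d))) : Prop :=
  (∀ C₁ ∈ 𝒞, ∀ C₂ ∈ 𝒞, C₁ ⊆ C₂ → C₁ = C₂) ∧
  ∃ Cs : List (Finset (Fin d)), Cs ≠ [] ∧ Cs.Nodup ∧ Cs.toFinset = 𝒞 ∧ RIP Cs ∧
    𝒮 = (((List.range Cs.length).filter (fun j => 1 ≤ j)).map (sep Cs)).toFinset

/-- `ν_S`: the number of clusters containing `S`. -/
def nu (𝒞 : Finset (Finset (Fin d))) (S : Finset (Fin d)) : ℕ :=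
  (𝒞.filter (fun C => S ⊆ C)).card

/-- The junction tree probability distribution. -/
noncomputable def jtPD (p : (Fin d → Ω) → ℝ) (𝒞 𝒮 : Finset (Finset (Fin d)))
    (y : Fin d → Ω) : ℝ :=
  (∏ C ∈ 𝒞, marg p C y) / ∏ S ∈ 𝒮, (marg p S y) ^ (nu 𝒞 S - 1)

/-- Conditional independence of `X_A` and `X_B` given `X_C`. -/
def CI (p : (Fin d → Ω) → ℝ) (A B C : Finset (Fin d)) : Prop :=
  ∀ y, marg p (A ∪ B ∪ C) y * marg p C y = marg p (A ∪ C) y * marg p (B ∪ C) y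


/-- `G` is a `k`-th order t-cherry tree on `Fin d`: there is a building order in which the
first `k-1` vertices form a complete graph and each later vertex is joined to exactly the
vertices of a `(k-1)`-clique among the earlier vertices. -/
def IsTCherry (k d : ℕ) (G : SimpleGraph (Fin d)) : Prop :=
  ∃ σ : Equiv.Perm (Fin d),
    (∀ i j : Fin d, i.val < k - 1 → j.val < k - 1 → i ≠ j → G.Adj (σ i) (σ j)) ∧
    (∀ j : Fin d, k - 1 ≤ j.val → ∃ N : Finset (Fin d),
      N.card = k - 1 ∧
      (∀ a ∈ N, ∃ i : Fin d, i.val < j.val ∧ σ i = a) ∧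
      (∀ a ∈ N, ∀ b ∈ N, a ≠ b → G.Adj a b) ∧
      (∀ i : Fin d, i.val < j.val → (G.Adj (σ j) (σ i) ↔ σ i ∈ N)) ∧
      (∀ a : Fin d, G.Adj (σ j) a → a ∈ N ∨ ∃ i : Fin d, j.val < i.val ∧ σ i = a))

/-- Chordality: every cycle of length greater than 3 has a chord. -/
def IsChordal {V : Type*} (G : SimpleGraph V) : Prop :=
  ∀ (u : V) (c : G.Walk u u), c.IsCycle → 3 < c.length →
    ∃ v w, v ∈ c.support ∧ w ∈ c.support ∧ G.Adj v w ∧ s(v, w) ∉ c.edges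

/-- A maximal clique (as a finset of vertices). -/
def MaxClique {V : Type*} (G : SimpleGraph V) (s : Finset V) : Prop :=
  G.IsClique ↑s ∧ ∀ t : Finset V, G.IsClique ↑t → s ⊆ t → s = t

/-- `C` separates `A` and `B` in `G`: every walk from `A` to `B` meets `C`. -/
def Separates {V : Type*} (G : SimpleGraph V) (A B C : Finset V) : Prop :=
  ∀ a ∈ A, ∀ b ∈ B, ∀ w : G.Walk a b, ∃ v ∈ w.support, v ∈ C

/-!
Let `R` be the set of vertices reachable from `A` by walks avoiding `C`. A clique meeting `R`
cannot meet the complement of `R ∪ C`, so every maximal clique lies in `R ∪ C` or in `Rᶜ`, and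
the factorization splits `p = f * g` with `f` depending only on `R ∪ C`, `g` only on `Rᶜ`, and
`(R ∪ C) ∩ Rᶜ = C`. For such a product the marginals on any `U ⊇ C` satisfy
`P_U P_C = P_{U ∩ (R ∪ C)} P_{U ∩ Rᶜ}`, which for `U = A ∪ B ∪ C` is the claim since `A ⊆ R`
and `B ∩ R = ∅`.
-/

lemma marg_pos {p : (Fin d → Ω) → ℝ} (hp : ∀ x, 0 < p x) (S : Finset (Fin d))
    (y : Fin d → Ω) : 0 < marg p S y :=
  Finset.sum_pos' (fun x _ => by split_ifs <;> simp [(hp x).le])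
    ⟨y, Finset.mem_univ y, by simp [hp y]⟩

lemma marg_mul_marg (p : (Fin d → Ω) → ℝ) (P Q : Finset (Fin d)) (y : Fin d → Ω) :
    marg p P y * marg p Q y = ∑ z : (Fin d → Ω) × (Fin d → Ω),
      if (∀ i ∈ P, z.1 i = y i) ∧ ∀ i ∈ Q, z.2 i = y i then p z.1 * p z.2 else 0 := by
  rw [marg, marg, Finset.sum_mul_sum, Fintype.sum_prod_type]
  simp only [ite_zero_mul_ite_zero]

lemma piecewise_swap_agree_iff {ι α : Type*} [DecidableEq ι] (x₁ x₂ y : ι → α)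
    {S T U : Finset ι} (hST : ∀ i, i ∈ S ∨ i ∈ T) (hU : S ∩ T ⊆ U) :
    ((∀ i ∈ U ∩ S, S.piecewise x₁ x₂ i = y i) ∧ ∀ i ∈ U ∩ T, S.piecewise x₂ x₁ i = y i) ↔
      (∀ i ∈ U, x₁ i = y i) ∧ ∀ i ∈ S ∩ T, x₂ i = y i := by
  constructor
  · rintro ⟨h₁, h₂⟩
    refine ⟨fun i hi => ?_, fun i hi => ?_⟩
    · by_cases hiS : i ∈ S
      · simpa [hiS] using h₁ i (Finset.mem_inter.2 ⟨hi, hiS⟩)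
      · simpa [hiS] using h₂ i (Finset.mem_inter.2 ⟨hi, (hST i).resolve_left hiS⟩)
    · have hiS := (Finset.mem_inter.1 hi).1
      simpa [hiS] using h₂ i (Finset.mem_inter.2 ⟨hU hi, (Finset.mem_inter.1 hi).2⟩)
  · rintro ⟨h₁, h₂⟩
    refine ⟨fun i hi => ?_, fun i hi => ?_⟩
    · simpa [(Finset.mem_inter.1 hi).2] using h₁ i (Finset.mem_inter.1 hi).1
    · by_cases hiS : i ∈ S
      · simpa [hiS] using h₂ i (Finset.mem_inter.2 ⟨hiS, (Finset.mem_inter.1 hi).2⟩)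
      · simpa [hiS] using h₁ i (Finset.mem_inter.1 hi).1

omit [Fintype Ω] in
lemma dependsOn_prod {ι : Type*} {f : ι → (Fin d → Ω) → ℝ} {K : ι → Finset (Fin d)}
    {s : Finset ι} {S : Finset (Fin d)} (hf : ∀ i, DependsOn (f i) (K i))
    (hS : ∀ i ∈ s, K i ⊆ S) : DependsOn (fun x => ∏ i ∈ s, f i x) S :=
  fun _ _ hxy => Finset.prod_congr rfl fun i hi =>
    hf i fun j hj => hxy j (Finset.mem_coe.2 (hS i hi hj))

/-- Swapping the `S`-coordinates of two configurations matches the terms of both sides. -/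
theorem marg_mul_marg_inter_eq_of_mul {p f g : (Fin d → Ω) → ℝ} {S T U : Finset (Fin d)}
    (hp : ∀ x, p x = f x * g x) (hf : DependsOn f S) (hg : DependsOn g T)
    (hST : ∀ i, i ∈ S ∨ i ∈ T) (hU : S ∩ T ⊆ U) (y : Fin d → Ω) :
    marg p U y * marg p (S ∩ T) y = marg p (U ∩ S) y * marg p (U ∩ T) y := by
  have swap : Function.Involutive fun z : (Fin d → Ω) × (Fin d → Ω) =>
      (S.piecewise z.1 z.2, S.piecewise z.2 z.1) := by
    intro z
    ext i <;> by_cases hi : i ∈ S <;> simp [hi]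
  rw [marg_mul_marg, marg_mul_marg]
  refine Fintype.sum_bijective _ swap.bijective _ _ fun ⟨x₁, x₂⟩ => ?_
  dsimp only
  have hcond := piecewise_swap_agree_iff x₁ x₂ y hST hU
  by_cases hx : (∀ i ∈ U, x₁ i = y i) ∧ ∀ i ∈ S ∩ T, x₂ i = y i
  · rw [if_pos hx, if_pos (hcond.2 hx)]
    have hx₁₂ : ∀ i ∈ S ∩ T, x₁ i = x₂ i := fun i hi =>
      (hx.1 i (hU hi)).trans (hx.2 i hi).symm
    have hf₁ : f (S.piecewise x₁ x₂) = f x₁ := hf fun i hi => by simp [Finset.mem_coe.1 hi]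
    have hf₂ : f (S.piecewise x₂ x₁) = f x₂ := hf fun i hi => by simp [Finset.mem_coe.1 hi]
    have hg₁ : g (S.piecewise x₁ x₂) = g x₂ := hg fun i hi => by
      by_cases hiS : i ∈ S
      · simpa [hiS] using hx₁₂ i (Finset.mem_inter.2 ⟨hiS, hi⟩)
      · simp [hiS]
    have hg₂ : g (S.piecewise x₂ x₁) = g x₁ := hg fun i hi => by
      by_cases hiS : i ∈ S
      · simpa [hiS] using (hx₁₂ i (Finset.mem_inter.2 ⟨hiS, hi⟩)).symm
      · simp [hiS]
    rw [hp, hp, hp, hp, hf₁, hf₂, hg₁, hg₂]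
    ring
  · rw [if_neg hx, if_neg (mt hcond.1 hx)]

theorem marg_mul_marg_inter_eq_of_prod {p : (Fin d → Ω) → ℝ}
    {ψ : Finset (Fin d) → (Fin d → Ω) → ℝ} {𝒦 : Finset (Finset (Fin d))}
    {S T U : Finset (Fin d)} (hp : ∀ x, p x = ∏ K ∈ 𝒦, ψ K x)
    (hψ : ∀ K, DependsOn (ψ K) K) (h𝒦 : ∀ K ∈ 𝒦, K ⊆ S ∨ K ⊆ T)
    (hST : ∀ i, i ∈ S ∨ i ∈ T) (hU : S ∩ T ⊆ U) (y : Fin d → Ω) :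
    marg p U y * marg p (S ∩ T) y = marg p (U ∩ S) y * marg p (U ∩ T) y :=
  marg_mul_marg_inter_eq_of_mul
    (fun x => by rw [hp, ← Finset.prod_filter_mul_prod_filter_not 𝒦 (· ⊆ S)])
    (dependsOn_prod (K := id) (s := {K ∈ 𝒦 | K ⊆ S}) hψ fun _ hK => (Finset.mem_filter.1 hK).2)
    (dependsOn_prod (K := id) hψ fun K hK =>
      (h𝒦 K (Finset.mem_filter.1 hK).1).resolve_left (Finset.mem_filter.1 hK).2)
    hST hU y

section reachAvoiding

variable {V : Type*} [Fintype V] (G : SimpleGraph V) (A C : Finset V)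

noncomputable def reachAvoiding : Finset V :=
  {v | ∃ a ∈ A, ∃ w : G.Walk a v, ∀ u ∈ w.support, u ∉ C}

variable {G A C}

lemma subset_reachAvoiding (h : Disjoint A C) : A ⊆ reachAvoiding G A C := fun a ha =>
  Finset.mem_filter.2 ⟨Finset.mem_univ a, a, ha, .nil, by
    simpa using Finset.disjoint_left.1 h ha⟩

lemma disjoint_reachAvoiding : Disjoint (reachAvoiding G A C) C :=
  Finset.disjoint_left.2 fun v hv => by
    obtain ⟨a, -, w, hw⟩ := (Finset.mem_filter.1 hv).2
    exact hw v w.end_mem_support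

lemma Separates.disjoint_reachAvoiding {B : Finset V} (h : Separates G A B C) :
    Disjoint B (reachAvoiding G A C) :=
  Finset.disjoint_left.2 fun b hb hbR => by
    obtain ⟨a, ha, w, hw⟩ := (Finset.mem_filter.1 hbR).2
    obtain ⟨v, hv, hvC⟩ := h a ha b hb w
    exact hw v hv hvC

lemma mem_reachAvoiding_of_adj {u v : V} (hv : v ∈ reachAvoiding G A C) (hvu : G.Adj v u)
    (hu : u ∉ C) : u ∈ reachAvoiding G A C := by
  obtain ⟨a, ha, w, hw⟩ := (Finset.mem_filter.1 hv).2
  refine Finset.mem_filter.2 ⟨Finset.mem_univ u, a, ha, w.concat hvu, fun x hx => ?_⟩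
  rw [SimpleGraph.Walk.support_concat, List.mem_append, List.mem_singleton] at hx
  exact hx.elim (hw x) fun hxu => hxu ▸ hu

lemma subset_reachAvoiding_union_or_subset_compl_of_isClique [DecidableEq V] {K : Finset V}
    (hK : G.IsClique (K : Set V)) :
    K ⊆ reachAvoiding G A C ∪ C ∨ K ⊆ (reachAvoiding G A C)ᶜ := by
  by_contra! h
  obtain ⟨⟨u, huK, hu⟩, ⟨v, hvK, hv⟩⟩ := And.imp Finset.not_subset.1 Finset.not_subset.1 h
  rw [Finset.mem_union, not_or] at hu
  rw [Finset.mem_compl, not_not] at hv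
  exact hu.1 (mem_reachAvoiding_of_adj hv (hK hvK huK fun h => hu.1 (h ▸ hv)) hu.2)

end reachAvoiding

theorem factorization_implies_global_markov_general
    {d : ℕ} {Ω : Type} [Fintype Ω] (p : (Fin d → Ω) → ℝ)
    (hppos : ∀ y, 0 < p y)
    (G : SimpleGraph (Fin d))
    (ψ : Finset (Fin d) → (Fin d → Ω) → ℝ)
    (hψloc : ∀ K : Finset (Fin d), ∀ y y' : Fin d → Ω,
      (∀ i ∈ K, y i = y' i) → ψ K y = ψ K y')
    (hfact : ∀ y, p y = ∏ K ∈ Finset.univ.powerset.filter (fun s => MaxClique G s), ψ K y)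
    (A B C : Finset (Fin d))
    (hAC : Disjoint A C)
    (hsep : Separates G A B C) :
    ∀ y, marg p (A ∪ B ∪ C) y = marg p (A ∪ C) y * marg p (B ∪ C) y / marg p C y := by
  intro y
  set R := reachAvoiding G A C
  have hAR : A ⊆ R := subset_reachAvoiding hAC
  have hRC : Disjoint R C := disjoint_reachAvoiding
  have hBR : Disjoint B R := hsep.disjoint_reachAvoiding
  have hST : (R ∪ C) ∩ Rᶜ = C := by
    ext i; grind [Finset.disjoint_left, Finset.mem_compl]
  have hUS : (A ∪ B ∪ C) ∩ (R ∪ C) = A ∪ C := by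
    ext i; grind [Finset.disjoint_left, Finset.mem_compl]
  have hUT : (A ∪ B ∪ C) ∩ Rᶜ = B ∪ C := by
    ext i; grind [Finset.disjoint_left, Finset.mem_compl]
  have key := marg_mul_marg_inter_eq_of_prod (S := R ∪ C) (T := Rᶜ) (U := A ∪ B ∪ C) hfact
    (fun K _ _ => hψloc K _ _)
    (fun K hK => subset_reachAvoiding_union_or_subset_compl_of_isClique
      (Finset.mem_filter.1 hK).2.1)
    (fun i => (em (i ∈ R)).imp (Finset.mem_union_left C) Finset.mem_compl.2)
    (by rw [hST]; exact Finset.subset_union_right)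
    y
  rw [hST, hUS, hUT] at key
  rw [eq_div_iff (marg_pos hppos C y).ne', key]

/-- for a strictly positive discrete distribution, factorization over the
maximal cliques of a graph `G` implies the global Markov property: if `C` separates `A`
from `B` in `G` (with `A`, `B`, `C` disjoint) and `P(X_V) = ∏_K ψ_K(X_K)` with positive
factors `ψ_K` depending only on the coordinates in `K`, then
`P(X_{A∪B∪C}) = P(X_{A∪C}) P(X_{B∪C}) / P(X_C)`. -/
theorem factorization_implies_global_markov
    {d : ℕ} {Ω : Type} [Fintype Ω] (p : (Fin d → Ω) → ℝ)
    (hp : IsProb p) (hppos : ∀ y, 0 < p y)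
    (G : SimpleGraph (Fin d))
    (ψ : Finset (Fin d) → (Fin d → Ω) → ℝ)
    (hψpos : ∀ K y, 0 < ψ K y)
    (hψloc : ∀ K : Finset (Fin d), ∀ y y' : Fin d → Ω,
      (∀ i ∈ K, y i = y' i) → ψ K y = ψ K y')
    (hfact : ∀ y, p y = ∏ K ∈ Finset.univ.powerset.filter (fun s => MaxClique G s), ψ K y)
    (A B C : Finset (Fin d))
    (hAB : Disjoint A B) (hAC : Disjoint A C) (hBC : Disjoint B C)
    (hsep : Separates G A B C) :
    ∀ y, marg p (A ∪ B ∪ C) y = marg p (A ∪ C) y * marg p (B ∪ C) y / marg p C y :=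
  factorization_implies_global_markov_general p hppos G ψ hψloc hfact A B C hAC hsep

end TCherryPaper
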